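/- Let A be a smooth and structured-decomposable probabilistic circuit over variables X respecting a vtree V. Then its augmented PC A_aug over X ∪ Z is itself smooth and decomposable (indeed structured-decomposable with respect to the vtree obtained from V by attaching to each inner node v a new leaf for Z_v). -/

import Mathlib

open scoped BigOperators

/-! ### Probabilistic circuits

A probabilistic circuit is a rooted DAG of leaf, sum and product nodes.  We represent the
DAG by a finite sequence of nodes; well-formedness (`PC.WF`) requires that the children of
every node have strictly smaller index, and the root is the node of largest index. -/

inductive PCNode (ι : Type) (Val : ι → Type) (N : ℕ) where
  | leaf (v : ι) (f : Val v → ℝ)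
  | sum (ch : List (Fin N × ℝ))
  | prod (ch : List (Fin N))

namespace PCNode

variable {ι : Type} {Val : ι → Type} {N : ℕ}

def children : PCNode ι Val N → List (Fin N)
  | .leaf _ _ => []
  | .sum ch => ch.map Prod.fst
  | .prod ch => ch

def childCount : PCNode ι Val N → ℕ
  | .leaf _ _ => 0
  | .sum ch => ch.length
  | .prod ch => ch.length

def isProdB : PCNode ι Val N → Bool
  | .prod _ => true
  | _ => false

end PCNode

structure PC (ι : Type) (Val : ι → Type) where
  numNodes : ℕ
  node : Fin numNodes → PCNode ι Val numNodes

namespace PC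

variable {ι : Type} {Val : ι → Type}

/-- Acyclicity: every edge goes from a larger to a strictly smaller index. -/
def WF (C : PC ι Val) : Prop :=
  ∀ i : Fin C.numNodes, ∀ j ∈ (C.node i).children, (j : ℕ) < (i : ℕ)

/-- Fuelled evaluation of a node; for a well-formed circuit, fuel `C.numNodes` always
suffices. -/
def evalFuel (C : PC ι Val) (x : ∀ i, Val i) : ℕ → Fin C.numNodes → ℝ
  | 0, _ => 0
  | k+1, i =>
    match C.node i with
    | .leaf v f => f (x v)
    | .sum ch => (ch.map fun p => p.2 * evalFuel C x k p.1).sum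
    | .prod ch => (ch.map fun j => evalFuel C x k j).prod

def nodeEval (C : PC ι Val) (x : ∀ i, Val i) (i : Fin C.numNodes) : ℝ :=
  evalFuel C x C.numNodes i

/-- The function computed by the circuit (the value of its root node). -/
def eval (C : PC ι Val) (x : ∀ i, Val i) : ℝ :=
  if h : 0 < C.numNodes then nodeEval C x ⟨C.numNodes - 1, by omega⟩ else 0

def scopeFuel [DecidableEq ι] (C : PC ι Val) : ℕ → Fin C.numNodes → Finset ι
  | 0, _ => ∅
  | k+1, i =>
    match C.node i with
    | .leaf v _ => {v}
    | .sum ch => (ch.map fun p => scopeFuel C k p.1).foldr (· ∪ ·) ∅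
    | .prod ch => (ch.map fun j => scopeFuel C k j).foldr (· ∪ ·) ∅

/-- The scope of a node: the set of variables its subcircuit depends on. -/
def scope [DecidableEq ι] (C : PC ι Val) (i : Fin C.numNodes) : Finset ι :=
  scopeFuel C C.numNodes i

def rootScope [DecidableEq ι] (C : PC ι Val) : Finset ι :=
  if h : 0 < C.numNodes then scope C ⟨C.numNodes - 1, by omega⟩ else ∅

/-- The size of a circuit: its number of edges. -/
def numEdges (C : PC ι Val) : ℕ :=
  ∑ i : Fin C.numNodes, (C.node i).childCount

def depthFuel (C : PC ι Val) : ℕ → Fin C.numNodes → ℕ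
  | 0, _ => 0
  | k+1, i =>
    match C.node i with
    | .leaf _ _ => 0
    | .sum ch => (ch.map fun p => depthFuel C k p.1 + 1).foldr max 0
    | .prod ch => (ch.map fun j => depthFuel C k j + 1).foldr max 0

/-- The depth of a circuit: the length of the longest root-to-leaf path. -/
def depth (C : PC ι Val) : ℕ :=
  if h : 0 < C.numNodes then depthFuel C C.numNodes ⟨C.numNodes - 1, by omega⟩ else 0

/-- All children of any sum node have the same scope. -/
def Smooth [DecidableEq ι] (C : PC ι Val) : Prop :=
  ∀ (i : Fin C.numNodes) (ch : List (Fin C.numNodes × ℝ)), C.node i = .sum ch →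
    ∀ p ∈ ch, ∀ q ∈ ch, scope C p.1 = scope C q.1

/-- The children of any product node have pairwise disjoint scopes. -/
def Decomposable [DecidableEq ι] (C : PC ι Val) : Prop :=
  ∀ (i : Fin C.numNodes) (ch : List (Fin C.numNodes)), C.node i = .prod ch →
    ch.Pairwise fun a b => Disjoint (scope C a) (scope C b)

/-- Sum-node weights and leaf functions are nonnegative. -/
def NonnegWeights (C : PC ι Val) : Prop :=
  (∀ (i : Fin C.numNodes) (ch : List (Fin C.numNodes × ℝ)), C.node i = .sum ch →
      ∀ p ∈ ch, 0 ≤ p.2) ∧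
  (∀ (i : Fin C.numNodes) (v : ι) (f : Val v → ℝ), C.node i = .leaf v f → ∀ a, 0 ≤ f a)

/-- The weights of every sum node sum to one. -/
def NormalizedSums (C : PC ι Val) : Prop :=
  ∀ (i : Fin C.numNodes) (ch : List (Fin C.numNodes × ℝ)), C.node i = .sum ch →
    (ch.map Prod.snd).sum = 1

/-- Every leaf computes a probability distribution over its variable. -/
def NormalizedLeaves [∀ i, Fintype (Val i)] (C : PC ι Val) : Prop :=
  ∀ (i : Fin C.numNodes) (v : ι) (f : Val v → ℝ), C.node i = .leaf v f → ∑ a, f a = 1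

/-- Sum/leaf and product nodes alternate: children of sums are products and children of
products are sums or leaves. -/
def Alternating (C : PC ι Val) : Prop :=
  (∀ (i : Fin C.numNodes) (ch : List (Fin C.numNodes × ℝ)), C.node i = .sum ch →
      ∀ p ∈ ch, (C.node p.1).isProdB = true) ∧
  (∀ (i : Fin C.numNodes) (ch : List (Fin C.numNodes)), C.node i = .prod ch →
      ∀ j ∈ ch, (C.node j).isProdB = false)

/-- For every input, at most one child of each sum node evaluates to a nonzero value. -/
def Deterministic (C : PC ι Val) : Prop :=
  ∀ (x : ∀ i, Val i) (i : Fin C.numNodes) (ch : List (Fin C.numNodes × ℝ)),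
    C.node i = .sum ch → ∀ p ∈ ch, ∀ q ∈ ch,
      nodeEval C x p.1 ≠ 0 → nodeEval C x q.1 ≠ 0 → p.1 = q.1

/-- The number of product nodes with a given scope. -/
def prodCount [DecidableEq ι] (C : PC ι Val) (S : Finset ι) : ℕ :=
  (Finset.univ.filter fun i : Fin C.numNodes =>
    (C.node i).isProdB = true ∧ scope C i = S).card

/-- The index of a product node within the product nodes sharing its scope. -/
def idxOf [DecidableEq ι] (C : PC ι Val) (i : Fin C.numNodes) : ℕ :=
  (Finset.univ.filter fun j : Fin C.numNodes =>
    (j : ℕ) < (i : ℕ) ∧ (C.node j).isProdB = true ∧ scope C j = scope C i).card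

/-- Bundle of basic "probabilistic circuit over all the variables" conditions:
well-formed DAG, nonnegative normalized weights, normalized leaves, alternation of
sum/leaf and product nodes, and the root depending on all variables. -/
def IsPCOver [DecidableEq ι] [Fintype ι] [∀ i, Fintype (Val i)] (C : PC ι Val) : Prop :=
  C.WF ∧ C.NonnegWeights ∧ C.NormalizedSums ∧ C.NormalizedLeaves ∧ C.Alternating ∧
    C.rootScope = Finset.univ

end PC

/-! ### Vtrees -/

inductive Vtree (ι : Type) where
  | leaf (x : ι)
  | node (l r : Vtree ι)
deriving DecidableEq

namespace Vtree

variable {ι : Type}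

def varsFinset [DecidableEq ι] : Vtree ι → Finset ι
  | .leaf x => {x}
  | .node l r => varsFinset l ∪ varsFinset r

def leavesList : Vtree ι → List ι
  | .leaf x => [x]
  | .node l r => leavesList l ++ leavesList r

/-- A vtree over a set `S` of variables: its leaves are in bijection with `S`. -/
def ValidOver (T : Vtree ι) (S : Set ι) : Prop :=
  T.leavesList.Nodup ∧ ∀ x : ι, x ∈ T.leavesList ↔ x ∈ S

def numNodesV : Vtree ι → ℕ
  | .leaf _ => 1
  | .node l r => numNodesV l + numNodesV r + 1

def IsChildOf (c p : Vtree ι) : Prop :=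
  match p with
  | .leaf _ => False
  | .node l r => c = l ∨ c = r

inductive IsSubtreeOf : Vtree ι → Vtree ι → Prop
  | refl (t : Vtree ι) : IsSubtreeOf t t
  | left {s l r : Vtree ι} : IsSubtreeOf s l → IsSubtreeOf s (.node l r)
  | right {s l r : Vtree ι} : IsSubtreeOf s r → IsSubtreeOf s (.node l r)

def subtreesList : Vtree ι → List (Vtree ι)
  | .leaf x => [.leaf x]
  | .node l r => .node l r :: (subtreesList l ++ subtreesList r)

def isNodeB : Vtree ι → Bool
  | .leaf _ => false
  | .node _ _ => true

/-- The inner (non-leaf) nodes of a vtree. -/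
def innerFinset [DecidableEq ι] (V : Vtree ι) : Finset (Vtree ι) :=
  (V.subtreesList.filter fun t => t.isNodeB).toFinset

def depthV : Vtree ι → ℕ
  | .leaf _ => 0
  | .node l r => max (depthV l) (depthV r) + 1

/-- The nodes of a vtree occurring at a given depth. -/
def atDepth : Vtree ι → ℕ → Set (Vtree ι)
  | t, 0 => {t}
  | .leaf _, _+1 => ∅
  | .node l r, k+1 => atDepth l k ∪ atDepth r k

theorem numNodesV_lt_of_isChildOf {c p : Vtree ι} (h : c.IsChildOf p) :
    c.numNodesV < p.numNodesV := by
  cases p with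
  | leaf x => exact h.elim
  | node l r =>
    rcases h with h | h <;> subst h <;> simp only [numNodesV] <;> omega

end Vtree

/-- The tree `V_{v → Z_v}`, viewed as a graph: vertices are the subtrees of `V`
(inner subtrees play the role of the latent variables `Z_v`, leaves the role of the
variables `X`), with edges between each node and its children. -/
def vtreeGraph {ι : Type} (V : Vtree ι) : SimpleGraph (Vtree ι) where
  Adj s t := (s.IsChildOf t ∨ t.IsChildOf s) ∧ s.IsSubtreeOf V ∧ t.IsSubtreeOf V
  symm := by
    constructor
    rintro s t ⟨h, hs, ht⟩
    exact ⟨h.symm, ht, hs⟩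
  loopless := by
    constructor
    rintro s ⟨h, -, -⟩
    rcases h with h | h <;>
      exact absurd (Vtree.numNodesV_lt_of_isChildOf h) (lt_irrefl _)

namespace PC

variable {ι : Type} {Val : ι → Type}

/-- Structured decomposability with respect to a vtree: every product node has exactly
two children, whose scopes are the variables of the two children of an inner node of the
vtree. -/
def StructuredBy [DecidableEq ι] (C : PC ι Val) (V : Vtree ι) : Prop :=
  ∀ (i : Fin C.numNodes) (ch : List (Fin C.numNodes)), C.node i = .prod ch →
    ∃ (c₁ c₂ : Fin C.numNodes) (l r : Vtree ι), ch = [c₁, c₂] ∧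
      (Vtree.node l r).IsSubtreeOf V ∧
      scope C c₁ = l.varsFinset ∧ scope C c₂ = r.varsFinset

/-- Generalized structured decomposability (for products with arbitrarily many children):
every product node decomposes the variables of some vtree node into the variables of a
family of its subtrees. -/
def StructuredByGen [DecidableEq ι] (C : PC ι Val) (V : Vtree ι) : Prop :=
  ∀ (i : Fin C.numNodes) (ch : List (Fin C.numNodes)), C.node i = .prod ch →
    ∃ u : Vtree ι, u.IsSubtreeOf V ∧
      (∀ j ∈ ch, ∃ s : Vtree ι, s.IsSubtreeOf u ∧ scope C j = s.varsFinset) ∧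
      (ch.map fun j => scope C j).foldr (· ∪ ·) ∅ = u.varsFinset

/-- The hidden state size: the maximum number of product nodes sharing the scope of an
inner vtree node. -/
def hiddenStateSize [DecidableEq ι] (C : PC ι Val) (V : Vtree ι) : ℕ :=
  V.innerFinset.sup fun t => prodCount C t.varsFinset

end PC

/-! ### Contiguity and linear vtrees (for variables `Fin n`) -/

def IsIntervalFin {n : ℕ} (S : Finset (Fin n)) : Prop :=
  ∃ a b : ℕ, ∀ i : Fin n, i ∈ S ↔ (a ≤ (i : ℕ) ∧ (i : ℕ) ≤ b)

def PC.ContiguousPC {n : ℕ} {Val : Fin n → Type} (C : PC (Fin n) Val) : Prop :=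
  ∀ i : Fin C.numNodes, IsIntervalFin (PC.scope C i)

def Vtree.ContiguousV {n : ℕ} (V : Vtree (Fin n)) : Prop :=
  ∀ t : Vtree (Fin n), t.IsSubtreeOf V → IsIntervalFin t.varsFinset

inductive Vtree.IsLinearFrom {n : ℕ} : ℕ → Vtree (Fin n) → Prop
  | single (a : ℕ) (ha : a < n) (h : a + 1 = n) : IsLinearFrom a (.leaf ⟨a, ha⟩)
  | cons (a : ℕ) (ha : a < n) (T : Vtree (Fin n)) (h : a + 1 < n) :
      IsLinearFrom (a+1) T → IsLinearFrom a (.node (.leaf ⟨a, ha⟩) T)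

/-- The (right-)linear vtree, splitting `{Xᵢ}` from `{Xᵢ₊₁, …, Xₙ}` at each level. -/
def Vtree.IsLinear {n : ℕ} (V : Vtree (Fin n)) : Prop := Vtree.IsLinearFrom 0 V

/-! ### Blocking, covers and vtree labellings -/

/-- `C` blocks all paths between `A` and `B` in the graph `G`. -/
def SimpleGraph.BlocksSets {α : Type} (G : SimpleGraph α) (C A B : Set α) : Prop :=
  ∀ ⦃a b : α⦄, a ∈ A → b ∈ B → ∀ p : G.Walk a b, ∃ c ∈ C, c ∈ p.support

/-- A valid labelling of a target vtree `W` with respect to a (tree-shaped) graph `G`,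
where the variable `i` is represented by the vertex `xv i` and `X` is the set of all
variables.  The root is labelled `∅`, each leaf is labelled by the parent (i.e. the
neighbours) of its variable, the label of every inner node covers its variables, and the
labels of the children block their variables from the other labels. -/
structure IsValidLabelling {α ι : Type} [DecidableEq ι] (G : SimpleGraph α) (xv : ι → α)
    (X : Set ι) (W : Vtree ι) (label : Vtree ι → Set α) : Prop where
  root_empty : label W = ∅
  leaf_parent : ∀ x : ι, (Vtree.leaf x).IsSubtreeOf W →
    label (.leaf x) = {p | G.Adj (xv x) p}
  covers : ∀ l r : Vtree ι, (Vtree.node l r).IsSubtreeOf W →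
    G.BlocksSets (label (.node l r))
      (xv '' ((Vtree.node l r).varsFinset : Set ι))
      (xv '' (X \ ((Vtree.node l r).varsFinset : Set ι)))
  blocks_left : ∀ l r : Vtree ι, (Vtree.node l r).IsSubtreeOf W →
    G.BlocksSets (label l) (xv '' (l.varsFinset : Set ι)) (label r ∪ label (.node l r))
  blocks_right : ∀ l r : Vtree ι, (Vtree.node l r).IsSubtreeOf W →
    G.BlocksSets (label r) (xv '' (r.varsFinset : Set ι)) (label l ∪ label (.node l r))

/-! ### The augmented circuit -/

/-- Value types for the augmented circuit: the original variables keep their values, and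
each latent variable `Z_v` (indexed by the vtree node `v`) takes natural number values. -/
@[reducible] def augVal {ι : Type} (Val : ι → Type) : ι ⊕ Vtree ι → Type
  | .inl i => Val i
  | .inr _ => ℕ

/-- Find the subtree of a vtree with the given variable set (if any). -/
def Vtree.findByVars {ι : Type} [DecidableEq ι] : Vtree ι → Finset ι → Option (Vtree ι)
  | .leaf x, S => if S = {x} then some (.leaf x) else none
  | .node l r, S =>
      if S = (Vtree.node l r).varsFinset then some (.node l r)
      else (findByVars l S).orElse fun _ => findByVars r S

/-- The augmented circuit `A_aug` of a structured circuit: each product node `t` with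
scope `X_v` gets an additional leaf child over the latent variable `Z_v`, computing the
indicator function `1[Z_v = idx(t)]`.  (Node `2*i+1` is a copy of node `i` of the original
circuit and node `2*i` is the extra indicator leaf attached to it when `i` is a product.) -/
def PC.augment {ι : Type} {Val : ι → Type} [DecidableEq ι] (C : PC ι Val) (V : Vtree ι) :
    PC (ι ⊕ Vtree ι) (augVal Val) where
  numNodes := 2 * C.numNodes
  node := fun k =>
    if hk : (k : ℕ) % 2 = 1 then
      match C.node ⟨(k : ℕ) / 2, by have := k.isLt; omega⟩ with
      | .leaf v f => .leaf (Sum.inl v) f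
      | .sum ch => .sum (ch.map fun p =>
          ((⟨2 * (p.1 : ℕ) + 1, by have := p.1.isLt; omega⟩ : Fin (2 * C.numNodes)), p.2))
      | .prod ch => .prod ((ch.map fun (j : Fin C.numNodes) =>
          (⟨2 * (j : ℕ) + 1, by have := j.isLt; omega⟩ : Fin (2 * C.numNodes))) ++
          [⟨2 * ((k : ℕ) / 2), by have := k.isLt; omega⟩])
    else
      match C.node ⟨(k : ℕ) / 2, by have := k.isLt; omega⟩ with
      | .prod _ => .leaf
          (Sum.inr ((V.findByVars (PC.scope C ⟨(k : ℕ) / 2, by have := k.isLt; omega⟩)).getD V))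
          (fun m => if m = PC.idxOf C ⟨(k : ℕ) / 2, by have := k.isLt; omega⟩ then 1 else 0)
      | _ => .leaf (Sum.inr V) (fun _ => 1)

/-- Combine an assignment of the observed variables with an assignment of the latent
variables into an assignment for the augmented circuit. -/
def augAssign {ι : Type} {Val : ι → Type} [DecidableEq ι] (V : Vtree ι) (x : ∀ i, Val i)
    (z : ∀ t ∈ V.innerFinset, ℕ) : ∀ s : ι ⊕ Vtree ι, augVal Val s :=
  fun s => match s with
  | .inl i => x i
  | .inr t => if ht : t ∈ V.innerFinset then z t ht else 0

/-- The vtree of the augmented circuit: a new leaf for `Z_v` is attached at each inner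
node `v`. -/
def Vtree.augTree {ι : Type} : Vtree ι → Vtree (ι ⊕ Vtree ι)
  | .leaf x => .leaf (.inl x)
  | .node l r => .node (.leaf (.inr (.node l r))) (.node (augTree l) (augTree r))

/-! If a node `i` of `A` has scope `X_s`, its copy in `A_aug` has as scope the variables of `s`
in the augmented vtree, i.e. `X_s` together with the latent `Z_v` of the inner nodes `v` of `s`.
This follows by induction over the circuit: a leaf adds no latent variable, a sum node inherits
the common scope of its children (smoothness), and a product node for `v = (l, r)` adds `Z_v`
to the scopes for `l` and `r`.  Smoothness, decomposability and structuredness of `A_aug`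
thereby reduce to facts about the augmented vtree. -/

namespace Vtree

variable {ι : Type}

theorem IsSubtreeOf.trans {a b c : Vtree ι} (hab : a.IsSubtreeOf b) (hbc : b.IsSubtreeOf c) :
    a.IsSubtreeOf c := by
  induction hbc with
  | refl => exact hab
  | left _ ih => exact .left ih
  | right _ ih => exact .right ih

theorem IsSubtreeOf.numNodesV_le {s t : Vtree ι} (h : s.IsSubtreeOf t) :
    s.numNodesV ≤ t.numNodesV := by
  induction h with
  | refl => exact le_rfl
  | left _ ih | right _ ih => simp only [numNodesV]; omega

theorem not_node_isSubtreeOf_left (l r : Vtree ι) : ¬ (node l r).IsSubtreeOf l := fun h => by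
  have := h.numNodesV_le
  simp only [numNodesV] at this
  omega

theorem not_node_isSubtreeOf_right (l r : Vtree ι) : ¬ (node l r).IsSubtreeOf r := fun h => by
  have := h.numNodesV_le
  simp only [numNodesV] at this
  omega

theorem IsSubtreeOf.nodup {s t : Vtree ι} (h : s.IsSubtreeOf t) (hnd : t.leavesList.Nodup) :
    s.leavesList.Nodup := by
  induction h with
  | refl => exact hnd
  | left _ ih => exact ih (List.nodup_append.mp hnd).1
  | right _ ih => exact ih (List.nodup_append.mp hnd).2.1

theorem IsSubtreeOf.augTree {s t : Vtree ι} (h : s.IsSubtreeOf t) :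
    s.augTree.IsSubtreeOf t.augTree := by
  induction h with
  | refl => exact .refl _
  | left _ ih => exact .right (.left ih)
  | right _ ih => exact .right (.right ih)

variable [DecidableEq ι]

theorem mem_varsFinset {x : ι} {t : Vtree ι} : x ∈ t.varsFinset ↔ x ∈ t.leavesList := by
  induction t with
  | leaf y => simp [varsFinset, leavesList]
  | node l r ihl ihr => simp [varsFinset, leavesList, ihl, ihr]

theorem varsFinset_nonempty (t : Vtree ι) : t.varsFinset.Nonempty := by
  induction t with
  | leaf x => exact Finset.singleton_nonempty x
  | node l r ihl _ => exact ihl.mono Finset.subset_union_left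

theorem IsSubtreeOf.varsFinset_subset {s t : Vtree ι} (h : s.IsSubtreeOf t) :
    s.varsFinset ⊆ t.varsFinset := by
  induction h with
  | refl => exact subset_rfl
  | left _ ih => exact ih.trans Finset.subset_union_left
  | right _ ih => exact ih.trans Finset.subset_union_right

theorem disjoint_varsFinset {l r : Vtree ι} (hnd : (node l r).leavesList.Nodup) :
    Disjoint l.varsFinset r.varsFinset :=
  Finset.disjoint_left.mpr fun _ hl hr =>
    List.disjoint_of_nodup_append hnd (mem_varsFinset.mp hl) (mem_varsFinset.mp hr)

theorem eq_leaf_of_varsFinset_eq_singleton {s : Vtree ι} {v : ι} (hnd : s.leavesList.Nodup)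
    (h : s.varsFinset = {v}) : s = leaf v := by
  cases s with
  | leaf x => simpa [varsFinset] using h
  | node l r =>
    obtain ⟨x, hx⟩ := varsFinset_nonempty l
    obtain ⟨y, hy⟩ := varsFinset_nonempty r
    have hxv : x = v := Finset.mem_singleton.mp (h ▸ Finset.mem_union_left _ hx)
    have hyv : y = v := Finset.mem_singleton.mp (h ▸ Finset.mem_union_right _ hy)
    subst hxv hyv
    exact absurd hy (Finset.disjoint_left.mp (disjoint_varsFinset hnd) hx)

theorem findByVars_sound {t u : Vtree ι} {S : Finset ι} (h : t.findByVars S = some u) :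
    u.IsSubtreeOf t ∧ u.varsFinset = S := by
  induction t with
  | leaf x =>
    simp only [findByVars] at h
    split_ifs at h with hS
    cases h
    exact ⟨.refl _, by simp [varsFinset, hS]⟩
  | node l r ihl ihr =>
    simp only [findByVars] at h
    split_ifs at h with hS
    · cases h
      exact ⟨.refl _, hS.symm⟩
    · rcases hl : l.findByVars S with _ | t
      · rw [hl, Option.orElse_none] at h
        exact ⟨.right (ihr h).1, (ihr h).2⟩
      · rw [hl, Option.orElse_some] at h
        cases h
        exact ⟨.left (ihl hl).1, (ihl hl).2⟩

theorem findByVars_varsFinset {s V : Vtree ι} (hnd : V.leavesList.Nodup) (h : s.IsSubtreeOf V) :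
    V.findByVars s.varsFinset = some s := by
  induction h with
  | refl =>
    cases s with
    | leaf x => simp [findByVars, varsFinset]
    | node l r => simp [findByVars]
  | @left l r hs ih =>
    have hdisj := disjoint_varsFinset hnd
    have hne : s.varsFinset ≠ (node l r).varsFinset := fun heq => by
      obtain ⟨y, hy⟩ := varsFinset_nonempty r
      have hyl : y ∈ l.varsFinset := hs.varsFinset_subset (heq ▸ Finset.mem_union_right _ hy)
      exact Finset.disjoint_left.mp hdisj hyl hy
    rw [findByVars, if_neg hne, ih (List.nodup_append.mp hnd).1, Option.orElse_some]
  | @right l r hs ih =>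
    have hdisj := disjoint_varsFinset hnd
    have hne : s.varsFinset ≠ (node l r).varsFinset := fun heq => by
      obtain ⟨y, hy⟩ := varsFinset_nonempty l
      have hyr : y ∈ r.varsFinset := hs.varsFinset_subset (heq ▸ Finset.mem_union_left _ hy)
      exact Finset.disjoint_left.mp hdisj hy hyr
    have hnone : l.findByVars s.varsFinset = none := by
      rcases hl : l.findByVars s.varsFinset with _ | u
      · rfl
      · obtain ⟨hu, hvars⟩ := findByVars_sound hl
        obtain ⟨y, hy⟩ := varsFinset_nonempty u
        exact absurd (hs.varsFinset_subset (hvars ▸ hy))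
          (Finset.disjoint_left.mp hdisj (hu.varsFinset_subset hy))
    rw [findByVars, if_neg hne, hnone, Option.orElse_none, ih (List.nodup_append.mp hnd).2.1]

theorem eq_of_varsFinset_eq {V s t : Vtree ι} (hnd : V.leavesList.Nodup) (hs : s.IsSubtreeOf V)
    (ht : t.IsSubtreeOf V) (h : s.varsFinset = t.varsFinset) : s = t := by
  simpa [← h, findByVars_varsFinset hnd hs] using findByVars_varsFinset hnd ht

theorem inl_mem_augTree_varsFinset {x : ι} {t : Vtree ι} :
    Sum.inl x ∈ t.augTree.varsFinset ↔ x ∈ t.varsFinset := by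
  induction t with
  | leaf y => simp [augTree, varsFinset]
  | node l r ihl ihr => simp [augTree, varsFinset, ihl, ihr]

theorem inr_mem_augTree_varsFinset {u t : Vtree ι} :
    Sum.inr u ∈ t.augTree.varsFinset ↔ u.IsSubtreeOf t ∧ u.isNodeB = true := by
  induction t with
  | leaf y =>
    simp only [augTree, varsFinset, Finset.mem_singleton, reduceCtorEq, false_iff, not_and]
    rintro ⟨⟩
    simp [isNodeB]
  | node l r ihl ihr =>
    simp only [augTree, varsFinset, Finset.mem_union, Finset.mem_singleton, Sum.inr.injEq,
      ihl, ihr]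
    constructor
    · rintro (rfl | ⟨h, hu⟩ | ⟨h, hu⟩)
      exacts [⟨.refl _, rfl⟩, ⟨.left h, hu⟩, ⟨.right h, hu⟩]
    · rintro ⟨h | h | h, hu⟩
      exacts [Or.inl rfl, Or.inr (Or.inl ⟨h, hu⟩), Or.inr (Or.inr ⟨h, hu⟩)]

theorem disjoint_augTree_varsFinset {s t : Vtree ι} (h : Disjoint s.varsFinset t.varsFinset) :
    Disjoint s.augTree.varsFinset t.augTree.varsFinset := by
  refine Finset.disjoint_left.mpr ?_
  rintro (x | u) hs ht
  · exact Finset.disjoint_left.mp h (inl_mem_augTree_varsFinset.mp hs)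
      (inl_mem_augTree_varsFinset.mp ht)
  · obtain ⟨y, hy⟩ := varsFinset_nonempty u
    exact Finset.disjoint_left.mp h
      ((inr_mem_augTree_varsFinset.mp hs).1.varsFinset_subset hy)
      ((inr_mem_augTree_varsFinset.mp ht).1.varsFinset_subset hy)

theorem inr_node_notMem_augTree_varsFinset_left (l r : Vtree ι) :
    Sum.inr (node l r) ∉ l.augTree.varsFinset := fun h =>
  not_node_isSubtreeOf_left l r (inr_mem_augTree_varsFinset.mp h).1

theorem inr_node_notMem_augTree_varsFinset_right (l r : Vtree ι) :
    Sum.inr (node l r) ∉ r.augTree.varsFinset := fun h =>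
  not_node_isSubtreeOf_right l r (inr_mem_augTree_varsFinset.mp h).1

end Vtree

theorem List.foldr_union_eq_of_forall_eq {α : Type} [DecidableEq α] {L : List (Finset α)}
    {A : Finset α} (hL : L ≠ []) (h : ∀ B ∈ L, B = A) : L.foldr (· ∪ ·) ∅ = A := by
  induction L with
  | nil => exact absurd rfl hL
  | cons B t ih =>
    rw [List.foldr_cons, h B List.mem_cons_self]
    rcases eq_or_ne t [] with rfl | ht
    · exact Finset.union_empty A
    · rw [ih ht fun B hB => h B (List.mem_cons_of_mem _ hB), Finset.union_self]

namespace PC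

variable {ι : Type} {Val : ι → Type} {C : PC ι Val}

theorem WF.lt_of_mem_sum (hwf : C.WF) {i : Fin C.numNodes} {ch : List (Fin C.numNodes × ℝ)}
    (h : C.node i = .sum ch) {p : Fin C.numNodes × ℝ} (hp : p ∈ ch) : p.1 < i :=
  hwf i p.1 (by rw [h]; exact List.mem_map_of_mem hp)

theorem WF.lt_of_mem_prod (hwf : C.WF) {i : Fin C.numNodes} {ch : List (Fin C.numNodes)}
    (h : C.node i = .prod ch) {j : Fin C.numNodes} (hj : j ∈ ch) : j < i :=
  hwf i j (by rw [h]; exact hj)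

variable [DecidableEq ι]

theorem scopeFuel_eq_scope (hwf : C.WF) (i : Fin C.numNodes) {k : ℕ} (hk : (i : ℕ) < k) :
    C.scopeFuel k i = C.scope i := by
  suffices ∀ k₁ k₂, (i : ℕ) < k₁ → (i : ℕ) < k₂ → C.scopeFuel k₁ i = C.scopeFuel k₂ i from
    this k C.numNodes hk i.isLt
  clear hk
  induction i using WellFoundedLT.induction with
  | _ i ih =>
  rintro (_ | k₁) (_ | k₂) h₁ h₂
  all_goals try omega
  simp only [scopeFuel]
  rcases h : C.node i with v | ch | ch
  · rfl
  · refine congrArg _ (List.map_congr_left fun p hp => ?_)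
    have := hwf.lt_of_mem_sum h hp
    exact ih _ this _ _ (by omega) (by omega)
  · refine congrArg _ (List.map_congr_left fun j hj => ?_)
    have := hwf.lt_of_mem_prod h hj
    exact ih _ this _ _ (by omega) (by omega)

theorem scope_of_leaf (hwf : C.WF) {i : Fin C.numNodes} {v : ι} {f : Val v → ℝ}
    (h : C.node i = .leaf v f) : C.scope i = {v} := by
  rw [← scopeFuel_eq_scope hwf i (Nat.lt_succ_self _), scopeFuel, h]

theorem scope_of_sum (hwf : C.WF) {i : Fin C.numNodes} {ch : List (Fin C.numNodes × ℝ)}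
    (h : C.node i = .sum ch) : C.scope i = (ch.map fun p => C.scope p.1).foldr (· ∪ ·) ∅ := by
  rw [← scopeFuel_eq_scope hwf i (Nat.lt_succ_self _), scopeFuel, h]
  refine congrArg _ (List.map_congr_left fun p hp => ?_)
  have := hwf.lt_of_mem_sum h hp
  exact scopeFuel_eq_scope hwf p.1 (by omega)

theorem scope_of_prod (hwf : C.WF) {i : Fin C.numNodes} {ch : List (Fin C.numNodes)}
    (h : C.node i = .prod ch) : C.scope i = (ch.map C.scope).foldr (· ∪ ·) ∅ := by
  rw [← scopeFuel_eq_scope hwf i (Nat.lt_succ_self _), scopeFuel, h]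
  refine congrArg _ (List.map_congr_left fun j hj => ?_)
  have := hwf.lt_of_mem_prod h hj
  exact scopeFuel_eq_scope hwf j (by omega)

theorem scope_of_structured (hwf : C.WF) {i c₁ c₂ : Fin C.numNodes} {l r : Vtree ι}
    (h : C.node i = .prod [c₁, c₂]) (hs₁ : C.scope c₁ = l.varsFinset)
    (hs₂ : C.scope c₂ = r.varsFinset) : C.scope i = (Vtree.node l r).varsFinset := by
  simp [scope_of_prod hwf h, hs₁, hs₂, Vtree.varsFinset]

theorem StructuredBy.exists_scope_eq (hwf : C.WF) {V : Vtree ι} (hstr : C.StructuredBy V)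
    {i : Fin C.numNodes} (h : (C.node i).isProdB = true) :
    ∃ s : Vtree ι, s.IsSubtreeOf V ∧ C.scope i = s.varsFinset := by
  obtain ⟨ch, hch⟩ : ∃ ch, C.node i = .prod ch := by
    revert h
    cases C.node i <;> simp [PCNode.isProdB]
  obtain ⟨c₁, c₂, l, r, rfl, hsub, hs₁, hs₂⟩ := hstr i ch hch
  exact ⟨_, hsub, scope_of_structured hwf hch hs₁ hs₂⟩

variable {V : Vtree ι}

variable (C V) in
def augCopy (i : Fin C.numNodes) : Fin (C.augment V).numNodes :=
  ⟨2 * i + 1, by simp only [augment]; omega⟩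

variable (C V) in
def augIndicator (i : Fin C.numNodes) : Fin (C.augment V).numNodes :=
  ⟨2 * i, by simp only [augment]; omega⟩

variable (V) in
theorem augment_node_augCopy (i : Fin C.numNodes) :
    (C.augment V).node (augCopy C V i) =
      match C.node i with
      | .leaf v f => .leaf (Sum.inl v) f
      | .sum ch => .sum (ch.map fun p => (augCopy C V p.1, p.2))
      | .prod ch => .prod (ch.map (augCopy C V) ++ [augIndicator C V i]) := by
  show (if _ : (2 * (i : ℕ) + 1) % 2 = 1 then _ else _) = _
  erw [dif_pos (by omega)]
  have hi : (2 * (i : ℕ) + 1) / 2 = i := by omega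
  simp only [augCopy, augIndicator, hi, Fin.eta]
  rfl

variable (V) in
theorem augment_node_augIndicator {i : Fin C.numNodes} {ch : List (Fin C.numNodes)}
    (h : C.node i = .prod ch) :
    (C.augment V).node (augIndicator C V i) =
      .leaf (Sum.inr ((V.findByVars (C.scope i)).getD V))
        (fun m => if m = C.idxOf i then 1 else 0) := by
  show (if _ : (2 * (i : ℕ)) % 2 = 1 then _ else _) = _
  erw [dif_neg (by omega)]
  have hi : (2 * (i : ℕ)) / 2 = i := by omega
  simp only [augIndicator, hi, Fin.eta, h]
  congr

theorem exists_augment_node_eq_leaf_of_even {k : Fin (C.augment V).numNodes}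
    (hk : (k : ℕ) % 2 = 0) : ∃ w f, (C.augment V).node k = .leaf w f := by
  show ∃ w f, (if _ : (k : ℕ) % 2 = 1 then _ else _) = _
  erw [dif_neg (by omega)]
  split <;> exact ⟨_, _, rfl⟩

theorem exists_augCopy_eq_of_odd {k : Fin (C.augment V).numNodes} (hk : (k : ℕ) % 2 = 1) :
    ∃ i, augCopy C V i = k := by
  have := k.isLt
  simp only [augment] at this
  exact ⟨⟨k / 2, by omega⟩, Fin.ext (by simp only [augCopy]; omega)⟩

theorem augment_wf (hwf : C.WF) : (C.augment V).WF := by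
  intro k j hj
  rcases Nat.mod_two_eq_zero_or_one k with hk | hk
  · obtain ⟨w, f, hleaf⟩ := exists_augment_node_eq_leaf_of_even hk
    simp [hleaf, PCNode.children] at hj
  obtain ⟨i, rfl⟩ := exists_augCopy_eq_of_odd hk
  rw [augment_node_augCopy] at hj
  rcases h : C.node i with v | ch | ch <;> rw [h] at hj
  · simp [PCNode.children] at hj
  · simp only [PCNode.children, List.map_map, List.mem_map] at hj
    obtain ⟨p, hp, rfl⟩ := hj
    have : (p.1 : ℕ) < i := hwf.lt_of_mem_sum h hp
    simp only [augCopy, Function.comp]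
    omega
  · simp only [PCNode.children, List.mem_append, List.mem_map, List.mem_singleton] at hj
    rcases hj with ⟨j, hj, rfl⟩ | rfl
    · have : (j : ℕ) < i := hwf.lt_of_mem_prod h hj
      simp only [augCopy]
      omega
    · simp only [augCopy, augIndicator]
      omega

theorem exists_of_augment_node_eq_sum {k : Fin (C.augment V).numNodes}
    {ch' : List (Fin (C.augment V).numNodes × ℝ)} (hk : (C.augment V).node k = .sum ch') :
    ∃ i ch, C.node i = .sum ch ∧ ch' = ch.map fun p => (augCopy C V p.1, p.2) := by
  rcases Nat.mod_two_eq_zero_or_one k with he | ho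
  · obtain ⟨w, f, hleaf⟩ := exists_augment_node_eq_leaf_of_even he
    cases hleaf.symm.trans hk
  obtain ⟨i, rfl⟩ := exists_augCopy_eq_of_odd ho
  rw [augment_node_augCopy] at hk
  rcases h : C.node i with v | ch | ch <;> rw [h] at hk <;> cases hk
  exact ⟨i, ch, h, rfl⟩

theorem exists_of_augment_node_eq_prod {k : Fin (C.augment V).numNodes}
    {ch' : List (Fin (C.augment V).numNodes)} (hk : (C.augment V).node k = .prod ch') :
    ∃ i ch, C.node i = .prod ch ∧ ch' = ch.map (augCopy C V) ++ [augIndicator C V i] := by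
  rcases Nat.mod_two_eq_zero_or_one k with he | ho
  · obtain ⟨w, f, hleaf⟩ := exists_augment_node_eq_leaf_of_even he
    cases hleaf.symm.trans hk
  obtain ⟨i, rfl⟩ := exists_augCopy_eq_of_odd ho
  rw [augment_node_augCopy] at hk
  rcases h : C.node i with v | ch | ch <;> rw [h] at hk <;> cases hk
  exact ⟨i, ch, h, rfl⟩

theorem scope_augIndicator (hwf : C.WF) (hnd : V.leavesList.Nodup) {i c₁ c₂ : Fin C.numNodes}
    {l r : Vtree ι} (h : C.node i = .prod [c₁, c₂]) (hsub : (Vtree.node l r).IsSubtreeOf V)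
    (hs₁ : C.scope c₁ = l.varsFinset) (hs₂ : C.scope c₂ = r.varsFinset) :
    (C.augment V).scope (augIndicator C V i) = {Sum.inr (Vtree.node l r)} := by
  rw [scope_of_leaf (augment_wf hwf) (augment_node_augIndicator V h),
    scope_of_structured hwf h hs₁ hs₂, Vtree.findByVars_varsFinset hnd hsub, Option.getD_some]

theorem scope_augCopy (hwf : C.WF) (hsm : C.Smooth) (hstr : C.StructuredBy V)
    (hnd : V.leavesList.Nodup) (i : Fin C.numNodes) {s : Vtree ι} (hs : s.IsSubtreeOf V)
    (hscope : C.scope i = s.varsFinset) :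
    (C.augment V).scope (augCopy C V i) = s.augTree.varsFinset := by
  induction i using WellFoundedLT.induction generalizing s with
  | _ i ih =>
  have hawf := augment_wf (V := V) hwf
  rcases h : C.node i with v | ch | ch
  · rw [scope_of_leaf hwf h] at hscope
    obtain rfl := Vtree.eq_leaf_of_varsFinset_eq_singleton (hs.nodup hnd) hscope.symm
    rw [scope_of_leaf hawf ((augment_node_augCopy V i).trans (by rw [h]))]
    rfl
  · have hne : ch ≠ [] := by
      rintro rfl
      rw [scope_of_sum hwf h] at hscope
      exact (s.varsFinset_nonempty.ne_empty hscope.symm).elim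
    have hchild : ∀ p ∈ ch, C.scope p.1 = s.varsFinset := fun p hp => by
      rw [← hscope, scope_of_sum hwf h,
        List.foldr_union_eq_of_forall_eq (by simpa using hne) (A := C.scope p.1)]
      simp only [List.mem_map]
      rintro _ ⟨q, hq, rfl⟩
      exact hsm i ch h q hq p hp
    rw [scope_of_sum hawf ((augment_node_augCopy V i).trans (by rw [h])), List.map_map]
    refine List.foldr_union_eq_of_forall_eq (by simpa using hne) ?_
    simp only [List.mem_map, Function.comp]
    rintro _ ⟨p, hp, rfl⟩
    exact ih p.1 (hwf.lt_of_mem_sum h hp) hs (hchild p hp)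
  · obtain ⟨c₁, c₂, l, r, rfl, hsub, hs₁, hs₂⟩ := hstr i ch h
    obtain rfl : s = .node l r := Vtree.eq_of_varsFinset_eq hnd hs hsub
      (hscope.symm.trans (scope_of_structured hwf h hs₁ hs₂))
    have ih₁ := ih c₁ (hwf.lt_of_mem_prod h (by simp)) (.trans (.left (.refl l)) hsub) hs₁
    have ih₂ := ih c₂ (hwf.lt_of_mem_prod h (by simp)) (.trans (.right (.refl r)) hsub) hs₂
    rw [scope_of_prod hawf ((augment_node_augCopy V i).trans (by rw [h]))]
    simp only [List.map_cons, List.map_nil, List.cons_append, List.nil_append, List.foldr_cons,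
      List.foldr_nil, Finset.union_empty, ih₁, ih₂, scope_augIndicator hwf hnd h hsub hs₁ hs₂]
    ext a
    simp only [Vtree.augTree, Vtree.varsFinset, Finset.mem_union, Finset.mem_singleton]
    tauto

theorem scope_augment_prod_children (hwf : C.WF) (hsm : C.Smooth) (hstr : C.StructuredBy V)
    (hnd : V.leavesList.Nodup) {i c₁ c₂ : Fin C.numNodes} {l r : Vtree ι}
    (h : C.node i = .prod [c₁, c₂]) (hsub : (Vtree.node l r).IsSubtreeOf V)
    (hs₁ : C.scope c₁ = l.varsFinset) (hs₂ : C.scope c₂ = r.varsFinset) :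
    ([c₁, c₂].map (augCopy C V) ++ [augIndicator C V i]).map (C.augment V).scope =
      [l.augTree.varsFinset, r.augTree.varsFinset, {Sum.inr (Vtree.node l r)}] := by
  simp only [List.map_cons, List.map_nil, List.cons_append, List.nil_append,
    scope_augCopy hwf hsm hstr hnd c₁ (.trans (.left (.refl l)) hsub) hs₁,
    scope_augCopy hwf hsm hstr hnd c₂ (.trans (.right (.refl r)) hsub) hs₂,
    scope_augIndicator hwf hnd h hsub hs₁ hs₂]

theorem augment_smooth (hwf : C.WF) (hsm : C.Smooth) (halt : C.Alternating)
    (hstr : C.StructuredBy V) (hnd : V.leavesList.Nodup) : (C.augment V).Smooth := by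
  intro k ch' hk p hp q hq
  obtain ⟨i, ch, h, rfl⟩ := exists_of_augment_node_eq_sum hk
  simp only [List.mem_map] at hp hq
  obtain ⟨p, hp, rfl⟩ := hp
  obtain ⟨q, hq, rfl⟩ := hq
  -- children of sum nodes are products, so their common scope is that of a vtree node
  obtain ⟨s, hs, hps⟩ := hstr.exists_scope_eq hwf (halt.1 i ch h p hp)
  rw [scope_augCopy hwf hsm hstr hnd p.1 hs hps,
    scope_augCopy hwf hsm hstr hnd q.1 hs ((hsm i ch h q hq p hp).trans hps)]

theorem augment_decomposable (hwf : C.WF) (hsm : C.Smooth) (hstr : C.StructuredBy V)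
    (hnd : V.leavesList.Nodup) : (C.augment V).Decomposable := by
  intro k ch' hk
  obtain ⟨i, ch, h, rfl⟩ := exists_of_augment_node_eq_prod hk
  obtain ⟨c₁, c₂, l, r, rfl, hsub, hs₁, hs₂⟩ := hstr i ch h
  rw [← List.pairwise_map (R := Disjoint),
    scope_augment_prod_children hwf hsm hstr hnd h hsub hs₁ hs₂]
  simp only [List.pairwise_cons, List.mem_cons, List.not_mem_nil, or_false, forall_eq_or_imp,
    forall_eq, false_imp_iff, implies_true, Finset.disjoint_singleton_right, List.Pairwise.nil,
    and_true]
  exact ⟨⟨Vtree.disjoint_augTree_varsFinset (Vtree.disjoint_varsFinset (hsub.nodup hnd)),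
    Vtree.inr_node_notMem_augTree_varsFinset_left l r⟩,
    Vtree.inr_node_notMem_augTree_varsFinset_right l r⟩

theorem augment_structuredByGen (hwf : C.WF) (hsm : C.Smooth) (hstr : C.StructuredBy V)
    (hnd : V.leavesList.Nodup) : (C.augment V).StructuredByGen V.augTree := by
  intro k ch' hk
  obtain ⟨i, ch, h, rfl⟩ := exists_of_augment_node_eq_prod hk
  obtain ⟨c₁, c₂, l, r, rfl, hsub, hs₁, hs₂⟩ := hstr i ch h
  have hscopes := scope_augment_prod_children hwf hsm hstr hnd h hsub hs₁ hs₂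
  refine ⟨(Vtree.node l r).augTree, hsub.augTree, fun j hj => ?_, ?_⟩
  · have hmem := hscopes ▸ List.mem_map_of_mem (f := (C.augment V).scope) hj
    simp only [List.mem_cons, List.not_mem_nil, or_false] at hmem
    rcases hmem with hl | hr | hZ
    · exact ⟨l.augTree, .right (.left (.refl _)), hl⟩
    · exact ⟨r.augTree, .right (.right (.refl _)), hr⟩
    · exact ⟨.leaf (.inr (.node l r)), .left (.refl _), hZ⟩
  · rw [hscopes]
    ext a
    simp only [List.foldr_cons, List.foldr_nil, Finset.union_empty, Vtree.augTree,
      Vtree.varsFinset, Finset.mem_union, Finset.mem_singleton]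
    tauto

end PC

theorem statement1_general {n : ℕ} (Val : Fin n → Type) [∀ i, Fintype (Val i)]
    (C : PC (Fin n) Val) (V : Vtree (Fin n)) (hV : V.ValidOver Set.univ)
    (hpc : C.IsPCOver) (hsm : C.Smooth) (hstr : C.StructuredBy V) :
    (C.augment V).Smooth ∧ (C.augment V).Decomposable ∧
      (C.augment V).StructuredByGen V.augTree := by
  obtain ⟨hwf, -, -, -, halt, -⟩ := hpc
  exact ⟨PC.augment_smooth hwf hsm halt hstr hV.1, PC.augment_decomposable hwf hsm hstr hV.1,
    PC.augment_structuredByGen hwf hsm hstr hV.1⟩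

/-- Let `A` be a smooth and structured-decomposable probabilistic circuit
over variables `X` respecting a vtree `V`.  Then its augmented PC `A_aug` over `X ∪ Z` is
itself smooth and decomposable — indeed structured-decomposable (in the generalized sense,
as its product nodes have three children) with respect to the vtree obtained from `V` by
attaching to each inner node `v` a new leaf for `Z_v`. -/
theorem statement1 {n : ℕ} (Val : Fin n → Type) [∀ i, Fintype (Val i)]
    (C : PC (Fin n) Val) (V : Vtree (Fin n)) (hV : V.ValidOver Set.univ)
    (hpc : C.IsPCOver) (hsm : C.Smooth) (hdec : C.Decomposable) (hstr : C.StructuredBy V) :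
    (C.augment V).Smooth ∧ (C.augment V).Decomposable ∧
      (C.augment V).StructuredByGen V.augTree :=
  statement1_general Val C V hV hpc hsm hstr
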